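/- arXiv:2412.19203 — 2 statements merged into one kernel-verified Lean document; each statement's English description precedes it below -/
import Mathlib

section
/- If G is a connected graph with λ₂(G) ≤ 1 which has neither K₅ nor K_{3,3} as a minor and whose girth equals 6, then G is isomorphic to the cycle C₆ on 6 vertices. -/
/-- The adjacency matrix of a simple graph over `ℝ` is Hermitian. -/
lemma adjMatrix_isHermitian {V : Type*} [Fintype V] (G : SimpleGraph V)
    [DecidableRel G.Adj] : ((G.adjMatrix ℝ)).IsHermitian := by
  rw [Matrix.IsHermitian, Matrix.conjTranspose_eq_transpose_of_trivial]
  exact G.isSymm_adjMatrix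

/-- The number of eigenvalues (counted with multiplicity) of the real adjacency matrix of `G`
satisfying the predicate `p`. -/
noncomputable def eigCount {V : Type*} [Fintype V] [DecidableEq V]
    (G : SimpleGraph V) (p : ℝ → Prop) : ℕ := by
  classical
  exact (Finset.univ.filter fun i =>
    p ((adjMatrix_isHermitian G).eigenvalues i)).card
/-- `HasMinor G H` : `H` is a minor of `G`, witnessed by a family of pairwise disjoint
nonempty branch sets, each inducing a connected subgraph of `G`, such that every edge of `H`
is realized by an edge of `G` between the corresponding branch sets. -/
def HasMinor {V : Type*} {W : Type*} (G : SimpleGraph V) (H : SimpleGraph W) : Prop :=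
  ∃ B : W → Set V,
    (∀ w, (B w).Nonempty) ∧
    (Pairwise fun w₁ w₂ => Disjoint (B w₁) (B w₂)) ∧
    (∀ w, (G.induce (B w)).Connected) ∧
    (∀ ⦃w₁ w₂⦄, H.Adj w₁ w₂ → ∃ a ∈ B w₁, ∃ b ∈ B w₂, G.Adj a b)

/-- `G` is planar in the sense of Wagner: it has neither `K₅` nor `K_{3,3}` as a minor. -/
def WagnerPlanar {V : Type*} (G : SimpleGraph V) : Prop :=
  ¬ HasMinor G (⊤ : SimpleGraph (Fin 5)) ∧
    ¬ HasMinor G (completeBipartiteGraph (Fin 3) (Fin 3))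

/-!
A shortest cycle of `G` is an induced `C₆`, and a vertex off it has at most one neighbour on it:
a chord or a second neighbour would close a cycle of length at most 5. So if `G` is not `C₆`,
connectivity yields an induced `C₆` with a pendant vertex. That graph carries two test vectors
spanning a plane on which the Rayleigh quotient of its adjacency matrix exceeds 1, and extending
them by zero gives such a plane for `G`. But if at most one eigenvalue of `A(G)` exceeds 1, every
plane contains a nonzero vector orthogonal to the corresponding eigenvector, whose Rayleigh
quotient is then at most 1.
-/

open Matrix Finset Function SimpleGraph

lemma exists_ne_zero_mul_add_mul_eq_zero (p q : ℝ) :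
    ∃ a b : ℝ, (a ≠ 0 ∨ b ≠ 0) ∧ a * p + b * q = 0 := by
  by_cases hp : p = 0
  · exact ⟨1, 0, by simp, by simp [hp]⟩
  · exact ⟨q, -p, Or.inr (neg_ne_zero.mpr hp), by ring⟩

lemma Matrix.dotProduct_conj_mulVec {n : Type*} [Fintype n] (U M : Matrix n n ℝ) (x : n → ℝ) :
    x ⬝ᵥ (U * M * star U) *ᵥ x = (star U *ᵥ x) ⬝ᵥ M *ᵥ (star U *ᵥ x) := by
  rw [← mulVec_mulVec, ← mulVec_mulVec, dotProduct_mulVec x U, star_eq_conjTranspose,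
    conjTranspose_eq_transpose_of_trivial, mulVec_transpose]

namespace Matrix.IsHermitian

variable {n : Type*} [Fintype n] [DecidableEq n] {A : Matrix n n ℝ} (hA : A.IsHermitian)

lemma dotProduct_mulVec_eq_sum_eigenvalues (x : n → ℝ) :
    x ⬝ᵥ A *ᵥ x =
      ∑ i, hA.eigenvalues i * (star (hA.eigenvectorUnitary : Matrix n n ℝ) *ᵥ x) i ^ 2 := by
  conv_lhs => rw [hA.spectral_theorem, Unitary.conjStarAlgAut_apply, dotProduct_conj_mulVec]
  simp only [mulVec_diagonal, dotProduct, Function.comp_apply, RCLike.ofReal_real_eq_id, id]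
  exact sum_congr rfl fun i _ => by ring

lemma dotProduct_self_eq_sum_sq (x : n → ℝ) :
    x ⬝ᵥ x = ∑ i, (star (hA.eigenvectorUnitary : Matrix n n ℝ) *ᵥ x) i ^ 2 := by
  have h := dotProduct_conj_mulVec (hA.eigenvectorUnitary : Matrix n n ℝ) 1 x
  rw [Matrix.mul_one, mem_unitaryGroup_iff.mp hA.eigenvectorUnitary.2, one_mulVec,
    one_mulVec] at h
  rw [h]
  simp only [dotProduct, sq]

theorem exists_dotProduct_mulVec_le {t : ℝ} (ht : #{i | t < hA.eigenvalues i} ≤ 1)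
    (x y : n → ℝ) : ∃ a b : ℝ, (a ≠ 0 ∨ b ≠ 0) ∧
      (a • x + b • y) ⬝ᵥ A *ᵥ (a • x + b • y) ≤ t * ((a • x + b • y) ⬝ᵥ (a • x + b • y)) := by
  set U := star (hA.eigenvectorUnitary : Matrix n n ℝ)
  -- `U *ᵥ z` lists the coordinates of `z` in the eigenbasis
  obtain ⟨a, b, hab, horth⟩ : ∃ a b : ℝ, (a ≠ 0 ∨ b ≠ 0) ∧
      ∀ i, t < hA.eigenvalues i → (U *ᵥ (a • x + b • y)) i = 0 := by
    by_cases h : ∃ i₀, t < hA.eigenvalues i₀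
    · obtain ⟨i₀, hi₀⟩ := h
      obtain ⟨a, b, hab, hker⟩ := exists_ne_zero_mul_add_mul_eq_zero ((U *ᵥ x) i₀) ((U *ᵥ y) i₀)
      refine ⟨a, b, hab, fun i hi => ?_⟩
      obtain rfl : i = i₀ := card_le_one.mp ht i (by simpa) i₀ (by simpa)
      simpa [mulVec_add, mulVec_smul] using hker
    · push Not at h
      exact ⟨1, 0, by simp, fun i hi => absurd hi (h i).not_gt⟩
  refine ⟨a, b, hab, ?_⟩
  rw [hA.dotProduct_mulVec_eq_sum_eigenvalues, hA.dotProduct_self_eq_sum_sq, mul_sum]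
  refine sum_le_sum fun i _ => ?_
  rcases lt_or_ge t (hA.eigenvalues i) with hi | hi
  · simp [U, horth i hi]
  · exact mul_le_mul_of_nonneg_right hi (sq_nonneg _)

end Matrix.IsHermitian

section Restriction

variable {R V W : Type*} [CommSemiring R] [Fintype V] [Fintype W] {f : W → V}

lemma extend_zero_dotProduct (hf : Injective f) (c : W → R) (w : V → R) :
    extend f c 0 ⬝ᵥ w = c ⬝ᵥ (w ∘ f) :=
  (Fintype.sum_of_injective f hf _ _ (fun v hv => by simp [extend_apply' _ _ _ hv])
    fun i => by simp [hf.extend_apply]).symm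

lemma extend_zero_dotProduct_self (hf : Injective f) (c : W → R) :
    extend f c 0 ⬝ᵥ extend f c 0 = c ⬝ᵥ c := by
  rw [extend_zero_dotProduct hf, extend_comp hf]

lemma extend_zero_dotProduct_mulVec (hf : Injective f) (A : Matrix V V R) (c : W → R) :
    extend f c 0 ⬝ᵥ A *ᵥ extend f c 0 = c ⬝ᵥ A.submatrix f f *ᵥ c := by
  rw [extend_zero_dotProduct hf]
  congr 1
  ext i
  rw [Function.comp_apply, mulVec, dotProduct_comm, extend_zero_dotProduct hf]
  exact dotProduct_comm _ _

end Restriction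

lemma SimpleGraph.Embedding.adjMatrix_submatrix {R V W : Type*} [Zero R] [One R]
    {G : SimpleGraph V} {H : SimpleGraph W} [DecidableRel G.Adj] [DecidableRel H.Adj]
    (e : H ↪g G) : (G.adjMatrix R).submatrix e e = H.adjMatrix R := by
  ext i j
  simp [adjMatrix_apply]

def pendantHexagon : SimpleGraph (Option (Fin 6)) where
  Adj
    | some i, some j => (cycleGraph 6).Adj i j
    | none, some j | some j, none => j = 0
    | none, none => False
  symm := ⟨by
    rintro (_ | i) (_ | j) h
    exacts [h, h, h, h.symm]⟩
  loopless := ⟨by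
    rintro (_ | i) h
    exacts [h, (cycleGraph 6).loopless.irrefl i h]⟩

instance : DecidableRel pendantHexagon.Adj := by
  rintro (_ | i) (_ | j) <;> unfold pendantHexagon <;> infer_instance

namespace pendantHexagon

variable {i j : Fin 6}

@[simp] lemma adj_some_some : pendantHexagon.Adj (some i) (some j) ↔ (cycleGraph 6).Adj i j :=
  Iff.rfl
@[simp] lemma adj_none_some : pendantHexagon.Adj none (some j) ↔ j = 0 := Iff.rfl
@[simp] lemma adj_some_none : pendantHexagon.Adj (some i) none ↔ i = 0 := Iff.rfl

-- The indicator of the path `5, 0, 1`, and that of the path `2, 3, 4` minus that of the pendant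
-- edge.
def testVector₁ : Option (Fin 6) → ℝ := fun o => o.elim 0 ![1, 1, 0, 0, 0, 1]
def testVector₂ : Option (Fin 6) → ℝ := fun o => o.elim (-1) ![-1, 0, 1, 1, 1, 0]

lemma dotProduct_mulVec_testVector (a b : ℝ) :
    (a • testVector₁ + b • testVector₂) ⬝ᵥ pendantHexagon.adjMatrix ℝ *ᵥ
        (a • testVector₁ + b • testVector₂) =
      (a • testVector₁ + b • testVector₂) ⬝ᵥ (a • testVector₁ + b • testVector₂) +
        (a ^ 2 + b ^ 2) := by
  simp +decide [dotProduct, mulVec, Fintype.sum_option, Fin.sum_univ_succ, adjMatrix_apply,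
    testVector₁, testVector₂, cycleGraph_adj]
  ring

end pendantHexagon

lemma eigCount_eq_card {V : Type*} [Fintype V] [DecidableEq V] (G : SimpleGraph V)
    [DecidableRel G.Adj] (p : ℝ → Prop) [DecidablePred p] :
    eigCount G p = #{i | p ((adjMatrix_isHermitian G).eigenvalues i)} := by
  unfold eigCount
  convert rfl

open pendantHexagon in
theorem two_le_eigCount_of_pendantHexagon_embedding {V : Type*} [Fintype V] [DecidableEq V]
    {G : SimpleGraph V} (e : pendantHexagon ↪g G) : 2 ≤ eigCount G (1 < ·) := by
  classical
  rw [eigCount_eq_card]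
  by_contra! h
  obtain ⟨a, b, hab, hle⟩ := (adjMatrix_isHermitian G).exists_dotProduct_mulVec_le (t := 1)
    (by omega) (extend e testVector₁ 0) (extend e testVector₂ 0)
  have hz : a • extend e testVector₁ 0 + b • extend e testVector₂ 0 =
      extend e (a • testVector₁ + b • testVector₂) 0 := by
    have h := (ExtendByZero.linearMap ℝ e).map_add (a • testVector₁) (b • testVector₂)
    simp only [map_smul] at h
    exact h.symm
  rw [hz, extend_zero_dotProduct_mulVec e.injective, extend_zero_dotProduct_self e.injective,
    e.adjMatrix_submatrix, dotProduct_mulVec_testVector, one_mul] at hle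
  have : 0 < a ^ 2 + b ^ 2 := by rcases hab with h | h <;> positivity
  linarith

section Girth

variable {V : Type*} {G : SimpleGraph V}

lemma SimpleGraph.cycleGraph_isContained_of_egirth_eq {n : ℕ} (hn : 2 < n) (h : G.egirth = n) :
    cycleGraph n ⊑ G := by
  obtain ⟨a, w, hw, hlen⟩ := (exists_egirth_eq_length (G := G)).mpr fun hG => by
    simp [egirth_eq_top.mpr hG] at h
  exact (cycleGraph_isContained_iff hn).mpr ⟨a, w, hw, by exact_mod_cast hlen.symm.trans h⟩

lemma SimpleGraph.egirth_le_of_cycle {n : ℕ} (p : Fin (n + 3) → V) (hp : Injective p)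
    (hadj : ∀ i, G.Adj (p i) (p (i + 1))) : G.egirth ≤ n + 3 := by
  have hcopy : cycleGraph (n + 3) ⊑ G := ⟨⟨⟨p, fun {i j} h => by
    rcases cycleGraph_adj.mp h with h | h <;> rw [sub_eq_iff_eq_add'] at h <;> subst h
    exacts [(hadj j).symm, hadj i]⟩, hp⟩⟩
  obtain ⟨a, w, hw, hlen⟩ := (cycleGraph_isContained_iff (by omega)).mp hcopy
  simpa [hlen] using egirth_le_length hw

namespace SimpleGraph.Copy

variable (c : Copy (cycleGraph 6) G)

lemma adj_add_one (i : Fin 6) : G.Adj (c i) (c (i + 1)) :=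
  c.toHom.map_adj (by simp [cycleGraph_adj])

lemma adj_add_add_one (i k : Fin 6) : G.Adj (c (i + k)) (c (i + (k + 1))) :=
  add_assoc i k 1 ▸ c.adj_add_one (i + k)

lemma not_adj_add (hg : G.egirth = 6) (i : Fin 6) {d : Fin 6} (hd : d = 2 ∨ d = 3) :
    ¬ G.Adj (c i) (c (i + d)) := fun h => by
  rcases hd with rfl | rfl
  · have hinj : ∀ i : Fin 6, Injective ![i, i + 1, i + 2] := by decide
    refine absurd (hg ▸ egirth_le_of_cycle (n := 0) (c ∘ ![i, i + 1, i + 2])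
      (c.injective.comp (hinj i)) ?_) (by norm_num)
    intro t; fin_cases t <;> simp
    exacts [c.adj_add_one i, c.adj_add_add_one i 1, h.symm]
  · have hinj : ∀ i : Fin 6, Injective ![i, i + 1, i + 2, i + 3] := by decide
    refine absurd (hg ▸ egirth_le_of_cycle (n := 1) (c ∘ ![i, i + 1, i + 2, i + 3])
      (c.injective.comp (hinj i)) ?_) (by norm_num)
    intro t; fin_cases t <;> simp
    exacts [c.adj_add_one i, c.adj_add_add_one i 1, c.adj_add_add_one i 2, h.symm]

lemma not_adj_add_of_adj (hg : G.egirth = 6) {u : V} (hu : u ∉ Set.range c) {i : Fin 6}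
    (hi : G.Adj u (c i)) {d : Fin 6} (hd : d = 1 ∨ d = 2 ∨ d = 3) : ¬ G.Adj u (c (i + d)) :=
  fun h => by
  have hu' {n} (f : Fin n → Fin 6) : u ∉ Set.range (c ∘ f) := fun ⟨t, ht⟩ => hu ⟨f t, ht⟩
  rcases hd with rfl | rfl | rfl
  · have hinj : ∀ i : Fin 6, Injective ![i, i + 1] := by decide
    refine absurd (hg ▸ egirth_le_of_cycle (n := 0) (Fin.cons u (c ∘ ![i, i + 1]))
      (Fin.cons_injective_iff.mpr ⟨hu' _, c.injective.comp (hinj i)⟩) ?_) (by norm_num)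
    intro t; fin_cases t <;> simp
    exacts [hi, c.adj_add_one i, h.symm]
  · have hinj : ∀ i : Fin 6, Injective ![i, i + 1, i + 2] := by decide
    refine absurd (hg ▸ egirth_le_of_cycle (n := 1) (Fin.cons u (c ∘ ![i, i + 1, i + 2]))
      (Fin.cons_injective_iff.mpr ⟨hu' _, c.injective.comp (hinj i)⟩) ?_) (by norm_num)
    intro t; fin_cases t <;> simp
    exacts [hi, c.adj_add_one i, c.adj_add_add_one i 1, h.symm]
  · have hinj : ∀ i : Fin 6, Injective ![i, i + 1, i + 2, i + 3] := by decide
    refine absurd (hg ▸ egirth_le_of_cycle (n := 2) (Fin.cons u (c ∘ ![i, i + 1, i + 2, i + 3]))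
      (Fin.cons_injective_iff.mpr ⟨hu' _, c.injective.comp (hinj i)⟩) ?_) (by norm_num)
    intro t; fin_cases t <;> simp
    exacts [hi, c.adj_add_one i, c.adj_add_add_one i 1, c.adj_add_add_one i 2, h.symm]

lemma adj_iff_of_egirth_eq_six (hg : G.egirth = 6) (i j : Fin 6) :
    G.Adj (c i) (c j) ↔ (cycleGraph 6).Adj i j := by
  obtain ⟨d, rfl⟩ : ∃ d, j = i + d := ⟨j - i, by abel⟩
  fin_cases d <;> simp +decide [cycleGraph_adj]
  · exact c.adj_add_one i
  · exact c.not_adj_add hg i (Or.inl rfl)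
  · exact c.not_adj_add hg i (Or.inr rfl)
  · exact fun h => c.not_adj_add hg (i + 4) (Or.inl rfl) (by simpa [add_assoc] using h.symm)
  · simpa [add_assoc] using (c.adj_add_one (i + 5)).symm

lemma eq_of_adj_of_adj (hg : G.egirth = 6) {u : V} (hu : u ∉ Set.range c) {i j : Fin 6}
    (hi : G.Adj u (c i)) (hj : G.Adj u (c j)) : i = j := by
  obtain ⟨d, rfl⟩ : ∃ d, j = i + d := ⟨j - i, by abel⟩
  fin_cases d
  · simp
  · exact absurd hj (c.not_adj_add_of_adj hg hu hi (by decide))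
  · exact absurd hj (c.not_adj_add_of_adj hg hu hi (by decide))
  · exact absurd hj (c.not_adj_add_of_adj hg hu hi (by decide))
  · have := c.not_adj_add_of_adj hg hu hj (d := 2) (by decide)
    exact absurd hi (by simpa [add_assoc] using this)
  · have := c.not_adj_add_of_adj hg hu hj (d := 1) (by decide)
    exact absurd hi (by simpa [add_assoc] using this)

end SimpleGraph.Copy

lemma SimpleGraph.Connected.exists_adj_not_mem_range {W : Type*} [Nonempty W] {f : W → V}
    (hG : G.Connected) (hf : ¬ Surjective f) : ∃ u w, u ∉ Set.range f ∧ G.Adj u (f w) := by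
  obtain ⟨v, hv⟩ := not_forall.mp hf
  obtain ⟨w₀⟩ := ‹Nonempty W›
  obtain ⟨d, -, ⟨w, hw⟩, hd⟩ :=
    (hG.preconnected (f w₀) v).some.exists_boundary_dart (Set.range f) ⟨w₀, rfl⟩ hv
  exact ⟨d.snd, w, hd, hw ▸ d.adj.symm⟩

lemma SimpleGraph.Copy.nonempty_pendantHexagon_embedding (c : Copy (cycleGraph 6) G)
    (hg : G.egirth = 6) {u : V} (hu : u ∉ Set.range c) {i : Fin 6} (hi : G.Adj u (c i)) :
    Nonempty (pendantHexagon ↪g G) := by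
  refine ⟨⟨⟨fun o => o.elim u fun k => c (i + k), ?_⟩, ?_⟩⟩
  · rintro (_ | k) (_ | l) h
    · rfl
    · exact absurd ⟨_, h.symm⟩ hu
    · exact absurd ⟨_, h⟩ hu
    · simpa using c.injective h
  · rintro (_ | k) (_ | l) <;> simp only [Function.Embedding.coeFn_mk, Option.elim]
    · simp
    · rw [pendantHexagon.adj_none_some]
      exact ⟨fun h => by simpa using (c.eq_of_adj_of_adj hg hu hi h).symm,
        by rintro rfl; simpa using hi⟩
    · rw [pendantHexagon.adj_some_none, G.adj_comm]
      exact ⟨fun h => by simpa using (c.eq_of_adj_of_adj hg hu hi h).symm,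
        by rintro rfl; simpa using hi⟩
    · simpa [cycleGraph_adj] using c.adj_iff_of_egirth_eq_six hg (i + k) (i + l)

end Girth

theorem girth_six_implies_C6_general {V : Type*} [Fintype V] [DecidableEq V] (G : SimpleGraph V)
    (hconn : G.Connected) (hl : eigCount G (fun t => 1 < t) ≤ 1)
    (hgirth : G.egirth = 6) :
    Nonempty (G ≃g SimpleGraph.cycleGraph 6) := by
  obtain ⟨c⟩ := cycleGraph_isContained_of_egirth_eq (by norm_num) hgirth
  by_cases hsurj : Surjective c
  · let e : cycleGraph 6 ↪g G := ⟨c.toEmbedding, c.adj_iff_of_egirth_eq_six hgirth _ _⟩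
    exact ⟨(RelIso.ofSurjective e hsurj).symm⟩
  · obtain ⟨u, i, hu, hi⟩ := hconn.exists_adj_not_mem_range hsurj
    obtain ⟨e⟩ := c.nonempty_pendantHexagon_embedding hgirth hu hi
    have := two_le_eigCount_of_pendantHexagon_embedding e
    omega

/-- a connected graph `G` with `λ₂(G) ≤ 1` having neither `K₅` nor `K_{3,3}`
as a minor and with girth `6` is isomorphic to the cycle `C₆`. -/
theorem girth_six_implies_C6 {V : Type*} [Fintype V] [DecidableEq V] (G : SimpleGraph V)
    (hconn : G.Connected) (hl : eigCount G (fun t => 1 < t) ≤ 1)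
    (hplanar : WagnerPlanar G) (hgirth : G.egirth = 6) :
    Nonempty (G ≃g SimpleGraph.cycleGraph 6) :=
  girth_six_implies_C6_general G hconn hl hgirth
end

section
/- In the girth-4 setting: every vertex of T₂ is adjacent to at most one vertex of T₀. -/
/-- For a 4-cycle `x₀x₁x₂x₃x₀` in `G` and `S ⊆ Fin 4`, the set
`T_S = {v ∉ {x₀,x₁,x₂,x₃} : N(v) ∩ {x₀,x₁,x₂,x₃} = {x i : i ∈ S}}`. -/
def TS {V : Type*} (G : SimpleGraph V) (x : Fin 4 → V) (S : Set (Fin 4)) : Set V :=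
  {v | v ∉ Set.range x ∧ ∀ i, G.Adj v (x i) ↔ i ∈ S}

/-- The set `T_j` of vertices outside the 4-cycle having exactly `j` neighbors among
`{x₀,x₁,x₂,x₃}`. -/
def Tdeg {V : Type*} (G : SimpleGraph V) (x : Fin 4 → V) (j : ℕ) : Set V :=
  {v | v ∉ Set.range x ∧ {i : Fin 4 | G.Adj v (x i)}.ncard = j}

/-!
If `v ∈ T₂` had two distinct neighbours `u, w ∈ T₀`, triangle-freeness would force `v` to be
adjacent to two opposite vertices of the 4-cycle, and `x₁, x₂, x₃, x₄, v, u, w` would induce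
`K_{2,3}` with two pendant edges at a vertex of degree 2. That graph has second eigenvalue
`√(4 - 2√2) > 1`. The adjacency form of an induced subgraph is the restriction of the form of `G`,
so the min-max principle pushes this to `λ₂(G) > 1`.
-/

open Matrix Module Function

namespace Matrix.IsHermitian

variable {n : Type*} [Fintype n] [DecidableEq n] {A : Matrix n n ℝ} (hA : A.IsHermitian)

lemma dotProduct_eq_sum_eigenvectorBasis (z w : n → ℝ) :
    z ⬝ᵥ w = ∑ i, (⇑(hA.eigenvectorBasis i) ⬝ᵥ z) * (⇑(hA.eigenvectorBasis i) ⬝ᵥ w) := by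
  have := hA.eigenvectorBasis.sum_inner_mul_inner (WithLp.toLp 2 z) (WithLp.toLp 2 w)
  simp only [EuclideanSpace.inner_eq_star_dotProduct, star_trivial] at this
  simpa only [dotProduct_comm w] using this.symm

lemma eigenvectorBasis_dotProduct_mulVec (i : n) (z : n → ℝ) :
    ⇑(hA.eigenvectorBasis i) ⬝ᵥ (A *ᵥ z) =
      hA.eigenvalues i * (⇑(hA.eigenvectorBasis i) ⬝ᵥ z) := by
  rw [dotProduct_mulVec, ← mulVec_transpose, ← conjTranspose_eq_transpose_of_trivial, hA.eq,
    mulVec_eigenvectorBasis, smul_dotProduct, smul_eq_mul]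

lemma dotProduct_mulVec_le {c : ℝ} {z : n → ℝ}
    (hz : ∀ i, c < hA.eigenvalues i → ⇑(hA.eigenvectorBasis i) ⬝ᵥ z = 0) :
    z ⬝ᵥ (A *ᵥ z) ≤ c * (z ⬝ᵥ z) := by
  rw [hA.dotProduct_eq_sum_eigenvectorBasis z, hA.dotProduct_eq_sum_eigenvectorBasis z z,
    Finset.mul_sum]
  refine Finset.sum_le_sum fun i _ => ?_
  rw [hA.eigenvectorBasis_dotProduct_mulVec]
  rcases le_or_gt (hA.eigenvalues i) c with hle | hlt
  · nlinarith [mul_self_nonneg (⇑(hA.eigenvectorBasis i) ⬝ᵥ z)]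
  · simp [hz i hlt]

/-- The easy half of the Courant–Fischer min-max principle. -/
theorem finrank_le_card_eigenvalues_gt {c : ℝ} (W : Submodule ℝ (n → ℝ))
    (hW : ∀ z ∈ W, z ≠ 0 → c * (z ⬝ᵥ z) < z ⬝ᵥ (A *ᵥ z)) :
    finrank ℝ W ≤ (Finset.univ.filter fun i => c < hA.eigenvalues i).card := by
  set S := Finset.univ.filter fun i => c < hA.eigenvalues i
  by_contra! hlt
  let coords : W →ₗ[ℝ] S → ℝ :=
    { toFun := fun z i => ⇑(hA.eigenvectorBasis i) ⬝ᵥ z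
      map_add' := fun z w => by ext; simp [dotProduct_add]
      map_smul' := fun a z => by ext; simp [dotProduct_smul] }
  obtain ⟨⟨z, hzW⟩, hker, hz0⟩ := Submodule.exists_mem_ne_zero_of_ne_bot
    (LinearMap.ker_ne_bot_of_finrank_lt (f := coords) (by simpa using hlt))
  have hz : ∀ i, c < hA.eigenvalues i → ⇑(hA.eigenvectorBasis i) ⬝ᵥ z = 0 := fun i hi =>
    congr_fun (LinearMap.mem_ker.mp hker) ⟨i, by simpa [S] using hi⟩
  exact (hW z hzW (by simpa using hz0)).not_ge (hA.dotProduct_mulVec_le hz)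

end Matrix.IsHermitian

lemma Function.Injective.extend_zero_dotProduct {ι η : Type*} [Fintype ι] [Fintype η]
    {f : ι → η} (hf : Injective f) (g : ι → ℝ) (z : η → ℝ) :
    extend f g 0 ⬝ᵥ z = g ⬝ᵥ (z ∘ f) := by
  classical
  rw [dotProduct, ← Finset.sum_subset (Finset.subset_univ (Finset.univ.map ⟨f, hf⟩)),
    Finset.sum_map]
  · simp [dotProduct, hf.extend_apply]
  · intro b _ hb
    rw [extend_apply' _ _ _ fun ⟨a, ha⟩ => hb (by simp [← ha]), Pi.zero_apply, zero_mul]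

namespace SimpleGraph

section Spectral

variable {V U : Type*} [Fintype V] [Fintype U] {G : SimpleGraph V} {H : SimpleGraph U}

lemma Embedding.adjMatrix_mulVec_extend_zero [DecidableRel G.Adj] [DecidableRel H.Adj]
    (f : H ↪g G) (g : U → ℝ) :
    (G.adjMatrix ℝ *ᵥ extend f g 0) ∘ f = H.adjMatrix ℝ *ᵥ g := by
  ext a
  rw [Function.comp_apply, mulVec, dotProduct_comm, f.injective.extend_zero_dotProduct,
    mulVec, dotProduct_comm]
  congr 1
  ext b
  simp [adjMatrix_apply]

theorem finrank_le_eigCount_of_embedding [DecidableEq V] [DecidableRel H.Adj] (f : H ↪g G)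
    {c : ℝ} (W : Submodule ℝ (U → ℝ))
    (hW : ∀ z ∈ W, z ≠ 0 → c * (z ⬝ᵥ z) < z ⬝ᵥ (H.adjMatrix ℝ *ᵥ z)) :
    finrank ℝ W ≤ eigCount G (c < ·) := by
  classical
  let E := ExtendByZero.linearMap ℝ f
  have hE : Injective E := extend_injective f.injective (0 : V → ℝ)
  rw [(Submodule.equivMapOfInjective E hE W).finrank_eq]
  refine (adjMatrix_isHermitian G).finrank_le_card_eigenvalues_gt _ ?_
  rintro _ ⟨z, hz, rfl⟩ hz0
  have hz0 : z ≠ 0 := by rintro rfl; simp at hz0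
  have hnorm : extend f z 0 ⬝ᵥ extend f z 0 = z ⬝ᵥ z := by
    rw [f.injective.extend_zero_dotProduct, extend_comp f.injective]
  have hform : extend f z 0 ⬝ᵥ (G.adjMatrix ℝ *ᵥ extend f z 0) =
      z ⬝ᵥ (H.adjMatrix ℝ *ᵥ z) := by
    rw [f.injective.extend_zero_dotProduct, f.adjMatrix_mulVec_extend_zero]
  rw [show E z = extend f z 0 from rfl, hnorm, hform]
  exact hW z hz hz0

/-- `inl i` is the cycle vertex `xᵢ`, `inr 0` is joined to `x₀` and `x₂`, and `inr 1`, `inr 2`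
are pendant at `inr 0`. -/
def k23TwoPendants : SimpleGraph (Fin 4 ⊕ Fin 3) := fromRel fun
  | .inl i, .inl j => j = i + 1
  | .inl i, .inr k => k = 0 ∧ (i = 0 ∨ i = 2)
  | .inr k, .inr l => k = 0 ∧ l ≠ 0
  | .inr _, .inl _ => False

instance : DecidableRel k23TwoPendants.Adj := fun a b => by
  rw [k23TwoPendants, fromRel_adj]
  cases a <;> cases b <;> dsimp only <;> infer_instance

def k23TwoPendantsTestVectors : Fin 2 → Fin 4 ⊕ Fin 3 → ℝ :=
  ![Sum.elim (fun _ => 1) (fun _ => -1), Sum.elim ![1, 0, 1, 0] (fun _ => 1)]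

lemma linearIndependent_k23TwoPendantsTestVectors :
    LinearIndependent ℝ k23TwoPendantsTestVectors :=
  LinearIndependent.pair_iff.mpr fun s t h => by
    have h0 := congr_fun h (.inl 0)
    have h1 := congr_fun h (.inl 1)
    simp only [Pi.add_apply, Pi.smul_apply, Sum.elim_inl, smul_eq_mul, mul_one, cons_val_zero,
      cons_val_one, Pi.zero_apply, mul_zero, add_zero] at h0 h1
    constructor <;> linarith

lemma k23TwoPendants_quadForm (c : Fin 2 → ℝ) :
    (∑ i, c i • k23TwoPendantsTestVectors i) ⬝ᵥ (∑ i, c i • k23TwoPendantsTestVectors i)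
        + (c 0 + c 1) ^ 2 + 2 * c 1 ^ 2 =
      (∑ i, c i • k23TwoPendantsTestVectors i) ⬝ᵥ
        (k23TwoPendants.adjMatrix ℝ *ᵥ ∑ i, c i • k23TwoPendantsTestVectors i) := by
  simp only [Fin.sum_univ_two, k23TwoPendantsTestVectors, dotProduct, mulVec,
    Fintype.sum_sum_type, Fin.sum_univ_four, Fin.sum_univ_three, adjMatrix_apply]
  simp [k23TwoPendants]
  ring

theorem two_le_eigCount_of_k23TwoPendants_embedding [DecidableEq V]
    (f : k23TwoPendants ↪g G) : 2 ≤ eigCount G (1 < ·) := by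
  calc 2 = finrank ℝ (Submodule.span ℝ (Set.range k23TwoPendantsTestVectors)) := by
        simp [finrank_span_eq_card linearIndependent_k23TwoPendantsTestVectors]
    _ ≤ eigCount G (1 < ·) := finrank_le_eigCount_of_embedding f _ ?_
  intro z hz hz0
  obtain ⟨c, rfl⟩ := (Submodule.mem_span_range_iff_exists_fun ℝ).mp hz
  have hc : c 0 ≠ 0 ∨ c 1 ≠ 0 := by
    by_contra! hc
    simp [Fin.sum_univ_two, hc] at hz0
  rw [← k23TwoPendants_quadForm]
  rcases hc with hc | hc
  · nlinarith [sq_nonneg (c 0 + c 1), sq_nonneg (c 1), mul_self_pos.mpr hc]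
  · nlinarith [sq_nonneg (c 0 + c 1), mul_self_pos.mpr hc]

end Spectral

section FourCycle

variable {V : Type*} {G : SimpleGraph V}

lemma CliqueFree.not_adj_of_adj_of_adj (htf : G.CliqueFree 3) {a b c : V} (hab : G.Adj a b)
    (hac : G.Adj a c) : ¬G.Adj b c := by
  classical
  exact fun hbc => htf {a, b, c} (is3Clique_triple_iff.mpr ⟨hab, hac, hbc⟩)

lemma CliqueFree.adj_iff_of_cycle_four (htf : G.CliqueFree 3) {x : Fin 4 → V}
    (hcyc : ∀ i, G.Adj (x i) (x (i + 1))) (i j : Fin 4) :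
    G.Adj (x i) (x j) ↔ j = i + 1 ∨ i = j + 1 := by
  have hchord : ∀ i, ¬G.Adj (x i) (x (i + 2)) := fun i => by
    have h := hcyc (i + 1)
    rw [add_assoc] at h
    exact htf.not_adj_of_adj_of_adj (hcyc i).symm h
  constructor
  · intro h
    have hij : i ≠ j := by rintro rfl; exact G.irrefl h
    have h₁ : j ≠ i + 2 := fun hj => hchord i (hj ▸ h)
    have h₂ : i ≠ j + 2 := fun hi => hchord j (hi ▸ h.symm)
    have hfin : ∀ i j : Fin 4, i ≠ j → j ≠ i + 2 → i ≠ j + 2 → j = i + 1 ∨ i = j + 1 := by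
      decide
    exact hfin i j hij h₁ h₂
  · rintro (rfl | rfl)
    exacts [hcyc i, (hcyc j).symm]

lemma not_adj_of_mem_Tdeg_zero {x : Fin 4 → V} {u : V} (hu : u ∈ Tdeg G x 0) (k : Fin 4) :
    ¬G.Adj u (x k) :=
  fun h => (Set.ncard_eq_zero (Set.toFinite _)).mp hu.2 |>.subset h

lemma CliqueFree.exists_adj_iff_of_mem_Tdeg_two (htf : G.CliqueFree 3) {x : Fin 4 → V}
    (hcyc : ∀ i, G.Adj (x i) (x (i + 1))) {v : V} (hv : v ∈ Tdeg G x 2) :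
    ∃ i, ∀ k, G.Adj v (x (k + i)) ↔ k = 0 ∨ k = 2 := by
  obtain ⟨i, j, hij, hset⟩ := Set.ncard_eq_two.mp hv.2
  have hvx : ∀ k, G.Adj v (x k) ↔ k = i ∨ k = j := fun k => by
    simpa using Set.ext_iff.mp hset k
  have hji : ¬(j = i + 1 ∨ i = j + 1) := by
    rw [← htf.adj_iff_of_cycle_four hcyc]
    exact htf.not_adj_of_adj_of_adj ((hvx i).mpr (.inl rfl)) ((hvx j).mpr (.inr rfl))
  have hfin : ∀ i j : Fin 4, i ≠ j → ¬(j = i + 1 ∨ i = j + 1) → ∀ k,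
      (k + i = i ∨ k + i = j ↔ k = 0 ∨ k = 2) := by
    decide
  exact ⟨i, fun k => (hvx _).trans (hfin i j hij hji k)⟩

theorem CliqueFree.nonempty_k23TwoPendants_embedding (htf : G.CliqueFree 3) {x : Fin 4 → V}
    (hinj : Injective x) (hcyc : ∀ i, G.Adj (x i) (x (i + 1))) {v u w : V}
    (hvx : v ∉ Set.range x) (hv : ∀ k, G.Adj v (x k) ↔ k = 0 ∨ k = 2)
    (hu : ∀ k, ¬G.Adj u (x k)) (hw : ∀ k, ¬G.Adj w (x k))
    (hvu : G.Adj v u) (hvw : G.Adj v w) (huw : u ≠ w) :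
    Nonempty (k23TwoPendants ↪g G) := by
  have hux : u ∉ Set.range x := by rintro ⟨k, rfl⟩; exact hu (k + 1) (hcyc k)
  have hwx : w ∉ Set.range x := by rintro ⟨k, rfl⟩; exact hw (k + 1) (hcyc k)
  have hinj' : Injective ![v, u, w] := by
    intro a b hab
    fin_cases a <;> fin_cases b <;> simp_all [hvu.ne, hvw.ne, hvu.ne.symm, hvw.ne.symm]
  have hdisj : ∀ k l, x k ≠ ![v, u, w] l := by
    intro k l hkl
    fin_cases l <;> simp_all
  refine ⟨⟨⟨Sum.elim x ![v, u, w], hinj.sumElim hinj' hdisj⟩, ?_⟩⟩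
  rintro (i | k) (j | l)
  · simp only [Embedding.coeFn_mk, Sum.elim_inl, htf.adj_iff_of_cycle_four hcyc, k23TwoPendants,
      fromRel_adj, ne_eq, Sum.inl.injEq, iff_and_self]
    rintro (rfl | rfl) <;> simp
  · fin_cases l <;> simp [k23TwoPendants, hv, hu, hw, G.adj_comm]
  · fin_cases k <;> simp [k23TwoPendants, hv, hu, hw]
  · fin_cases k <;> fin_cases l <;>
      simp [k23TwoPendants, hvu, hvw, G.adj_comm, htf.not_adj_of_adj_of_adj hvu hvw]

end FourCycle

end SimpleGraph

theorem girth_four_T2_at_most_one_T0_nbr_general {V : Type*} [Fintype V] [DecidableEq V] (G : SimpleGraph V)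
    (htf : G.CliqueFree 3)
    (hl : eigCount G (fun t => 1 < t) ≤ 1)
    (x : Fin 4 → V) (hinj : Function.Injective x)
    (hcyc : ∀ i, G.Adj (x i) (x (i + 1))) :
    ∀ v ∈ Tdeg G x 2, ∀ u ∈ Tdeg G x 0, ∀ w ∈ Tdeg G x 0,
      G.Adj v u → G.Adj v w → u = w := by
  intro v hv u hu w hw hvu hvw
  by_contra huw
  obtain ⟨i, hvi⟩ := htf.exists_adj_iff_of_mem_Tdeg_two hcyc hv
  obtain ⟨f⟩ := htf.nonempty_k23TwoPendants_embedding (x := fun k => x (k + i))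
    (hinj.comp (add_left_injective i)) (fun k => by simpa [add_right_comm] using hcyc (k + i))
    (fun ⟨k, hk⟩ => hv.1 ⟨k + i, hk⟩) hvi (fun _ => SimpleGraph.not_adj_of_mem_Tdeg_zero hu _)
    (fun _ => SimpleGraph.not_adj_of_mem_Tdeg_zero hw _) hvu hvw huw
  exact (SimpleGraph.two_le_eigCount_of_k23TwoPendants_embedding f).not_gt (Nat.lt_succ_of_le hl)

/-- in the girth-4 setting, every vertex of `T₂` is adjacent to at most one
vertex of `T₀`. -/
theorem girth_four_T2_at_most_one_T0_nbr {V : Type*} [Fintype V] [DecidableEq V] (G : SimpleGraph V)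
    (hconn : G.Connected) (htf : G.CliqueFree 3)
    (hl : eigCount G (fun t => 1 < t) ≤ 1) (hplanar : WagnerPlanar G)
    (hgirth : G.egirth = 4) (x : Fin 4 → V) (hinj : Function.Injective x)
    (hcyc : ∀ i, G.Adj (x i) (x (i + 1))) :
    ∀ v ∈ Tdeg G x 2, ∀ u ∈ Tdeg G x 0, ∀ w ∈ Tdeg G x 0,
      G.Adj v u → G.Adj v w → u = w :=
  girth_four_T2_at_most_one_T0_nbr_general G htf hl x hinj hcyc
end
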